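/- If R is a correspondence between pointed compact geodesic metric spaces E and E' with distortion D, then the induced correspondence between Kac(E) and Kac(E') (pairing classes that admit R-related representatives) has distortion at most 6D. -/

import Mathlib

/-- `E` is a geodesic space: any two points are joined by an isometric path. -/
def IsGeodesicSpace (E : Type*) [MetricSpace E] : Prop :=
  ∀ a b : E, ∃ γ : ℝ → E, γ 0 = a ∧ γ (dist a b) = b ∧
    ∀ s ∈ Set.Icc (0 : ℝ) (dist a b), ∀ t ∈ Set.Icc (0 : ℝ) (dist a b),
      dist (γ s) (γ t) = |s - t|

/-- The continuous cactus pseudo-distance associated with the pointed space `(E, ρ)`: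
`d_Kac(a, b) = d(ρ,a) + d(ρ,b) - 2 sup_γ inf_t d(ρ, γ(t))`, the supremum being over all
continuous curves `γ : [0,1] → E` from `a` to `b`. -/
noncomputable def dKac {E : Type*} [MetricSpace E] (ρ a b : E) : ℝ :=
  dist ρ a + dist ρ b -
    2 * sSup {m : ℝ | ∃ γ : ℝ → E, ContinuousOn γ (Set.Icc 0 1) ∧ γ 0 = a ∧ γ 1 = b ∧
      m = ⨅ t : Set.Icc (0 : ℝ) 1, dist ρ (γ t)}


/-- A correspondence between the pointed sets `(X, ρ)` and `(Y, ρ')`. -/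
def IsCorrespondence {X Y : Type*} (ρ : X) (ρ' : Y) (R : Set (X × Y)) : Prop :=
  (ρ, ρ') ∈ R ∧ (∀ x : X, ∃ y : Y, (x, y) ∈ R) ∧ (∀ y : Y, ∃ x : X, (x, y) ∈ R)

/-- The distortion of a correspondence `R` with respect to the (pseudo-)distances
`dX` and `dY`. -/
noncomputable def distortion {X Y : Type*} (dX : X → X → ℝ) (dY : Y → Y → ℝ)
    (R : Set (X × Y)) : ℝ :=
  sSup {r : ℝ | ∃ p ∈ R, ∃ q ∈ R, r = |dX p.1 q.1 - dY p.2 q.2|}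

/-- The pointed Gromov–Hausdorff distance between the quotient metric spaces of the
pseudo-distances `dX`, `dY`, expressed as half the infimum of distortions of
correspondences containing the pair of base points. -/
noncomputable def ghDistCorr {X Y : Type*} (dX : X → X → ℝ) (dY : Y → Y → ℝ)
    (ρ : X) (ρ' : Y) : ℝ :=
  sInf {D : ℝ | ∃ R : Set (X × Y), IsCorrespondence ρ ρ' R ∧ D = distortion dX dY R} / 2


/-!
Every point on a geodesic from `x` to `y` lies at distance at least the Gromov product
`(d(ρ,x) + d(ρ,y) - d(x,y)) / 2` from `ρ`. Given a path `γ` in `E` staying at height `≥ m` above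
`ρ`, sample it finely, transport the samples to `E'` through `R`, and join consecutive images by
geodesics: the samples stay at height `≥ m - D`, consecutive ones are `≤ ε + D` apart, so the
resulting path in `E'` stays at height `≥ m - (3D + ε)/2`. Hence the suprema in the cactus
distances differ by at most `3D/2`, and `|d_Kac - d'_Kac| ≤ D + D + 2 · 3D/2 = 5D`.
-/

open Set

theorem joinedIn_of_forall_joinedIn_succ {X : Type*} [TopologicalSpace X] {F : Set X}
    {y : ℕ → X} {n : ℕ} (h₀ : y 0 ∈ F) (h : ∀ i < n, JoinedIn F (y i) (y (i + 1))) :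
    JoinedIn F (y 0) (y n) := by
  induction n with
  | zero => exact JoinedIn.refl h₀
  | succ n ih => exact (ih fun i hi => h i (by omega)).trans (h n n.lt_succ_self)

theorem exists_seq_mem_of_forall_exists {X Y : Type*} {R : Set (X × Y)}
    (hR : ∀ x, ∃ y, (x, y) ∈ R) (f : ℕ → X) {n : ℕ} (hn : n ≠ 0) {a b : Y}
    (ha : (f 0, a) ∈ R) (hb : (f n, b) ∈ R) :
    ∃ y : ℕ → Y, y 0 = a ∧ y n = b ∧ ∀ i, (f i, y i) ∈ R := by
  choose g hg using hR
  refine ⟨Function.update (Function.update (g ∘ f) 0 a) n b, by simp [hn.symm], by simp,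
    fun i => ?_⟩
  by_cases hin : i = n
  · subst hin; simpa
  by_cases hi0 : i = 0
  · subst hi0; simpa [hn.symm]
  · simpa [hin, hi0] using hg (f i)

theorem natCast_div_mem_Icc {i n : ℕ} (h : i ≤ n) : (i : ℝ) / n ∈ Icc (0 : ℝ) 1 :=
  ⟨by positivity, div_le_one_of_le₀ (by exact_mod_cast h) n.cast_nonneg⟩

theorem ContinuousOn.exists_nat_dist_lt {E : Type*} [MetricSpace E] {γ : ℝ → E}
    (hγ : ContinuousOn γ (Icc 0 1)) {ε : ℝ} (hε : 0 < ε) :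
    ∃ n : ℕ, n ≠ 0 ∧ ∀ i < n, dist (γ (i / n)) (γ ((i + 1 : ℕ) / n)) < ε := by
  obtain ⟨δ, hδ, hγδ⟩ :=
    Metric.uniformContinuousOn_iff.1 (isCompact_Icc.uniformContinuousOn_of_continuous hγ) ε hε
  obtain ⟨n, hn⟩ := exists_nat_one_div_lt hδ
  refine ⟨n + 1, n.succ_ne_zero, fun i hi =>
    hγδ _ (natCast_div_mem_Icc hi.le) _ (natCast_div_mem_Icc hi) ?_⟩
  rw [Real.dist_eq, abs_sub_comm, ← sub_div]
  push_cast
  rw [add_sub_cancel_left, abs_of_pos (by positivity)]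
  exact_mod_cast hn

namespace IsGeodesicSpace

variable {E : Type*} [MetricSpace E]

theorem joinedIn_le_dist (hE : IsGeodesicSpace E) {ρ x y : E} {c : ℝ}
    (h : 2 * c + dist x y ≤ dist ρ x + dist ρ y) : JoinedIn {z | c ≤ dist ρ z} x y := by
  obtain ⟨γ, h₀, h₁, hγ⟩ := hE x y
  set L := dist x y
  have hL : 0 ≤ L := dist_nonneg
  have hcont : ContinuousOn γ (Icc 0 L) :=
    (LipschitzOnWith.of_dist_le_mul (K := 1) fun s hs t ht => by
      rw [hγ s hs t ht, Real.dist_eq, NNReal.coe_one, one_mul]).continuousOn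
  have hmaps : MapsTo (fun t : ℝ => L * t) (Icc 0 1) (Icc 0 L) := fun t ht =>
    ⟨mul_nonneg hL ht.1, mul_le_of_le_one_right hL ht.2⟩
  refine JoinedIn.ofLine (f := fun t => γ (L * t))
    (hcont.comp (continuousOn_const.mul continuousOn_id) hmaps) (by simp [h₀]) (by simp [h₁]) ?_
  rintro _ ⟨t, ht, rfl⟩
  have hu := hmaps ht
  have hx := hγ _ hu 0 (left_mem_Icc.2 hL)
  have hy := hγ _ hu L (right_mem_Icc.2 hL)
  rw [h₀, sub_zero, abs_of_nonneg hu.1] at hx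
  rw [h₁, abs_of_nonpos (by linarith [hu.2])] at hy
  have hρx := dist_triangle ρ (γ (L * t)) x
  have hρy := dist_triangle ρ (γ (L * t)) y
  show c ≤ dist ρ (γ (L * t))
  linarith

end IsGeodesicSpace

section Cactus

variable {E : Type*} [MetricSpace E]

def pathHeights (ρ a b : E) : Set ℝ :=
  {m : ℝ | ∃ γ : ℝ → E, ContinuousOn γ (Icc 0 1) ∧ γ 0 = a ∧ γ 1 = b ∧
    m = ⨅ t : Icc (0 : ℝ) 1, dist ρ (γ t)}

theorem dKac_eq (ρ a b : E) :
    dKac ρ a b = dist ρ a + dist ρ b - 2 * sSup (pathHeights ρ a b) :=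
  rfl

theorem iInf_dist_le (ρ : E) (γ : ℝ → E) {t : ℝ} (ht : t ∈ Icc (0 : ℝ) 1) :
    ⨅ s : Icc (0 : ℝ) 1, dist ρ (γ s) ≤ dist ρ (γ t) :=
  ciInf_le ⟨0, by rintro _ ⟨s, rfl⟩; exact dist_nonneg⟩ (⟨t, ht⟩ : Icc (0 : ℝ) 1)

theorem nonneg_of_mem_pathHeights {ρ a b : E} {m : ℝ} (hm : m ∈ pathHeights ρ a b) :
    0 ≤ m := by
  obtain ⟨γ, -, -, -, rfl⟩ := hm
  exact le_ciInf fun _ => dist_nonneg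

theorem bddAbove_pathHeights (ρ a b : E) : BddAbove (pathHeights ρ a b) := by
  refine ⟨dist ρ a, ?_⟩
  rintro _ ⟨γ, -, h₀, -, rfl⟩
  simpa [h₀] using iInf_dist_le ρ γ (left_mem_Icc.2 zero_le_one)

theorem JoinedIn.le_sSup_pathHeights {ρ a b : E} {c : ℝ}
    (h : JoinedIn {z | c ≤ dist ρ z} a b) : c ≤ sSup (pathHeights ρ a b) := by
  obtain ⟨p, hp⟩ := h
  refine le_csSup_of_le (bddAbove_pathHeights ρ a b)
    ⟨p.extend, p.continuous_extend.continuousOn, p.extend_zero, p.extend_one, rfl⟩ ?_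
  exact le_ciInf fun t => by rw [p.extend_extends']; exact hp t

end Cactus

section Correspondence

variable {E E' : Type*} [MetricSpace E] [MetricSpace E'] {R : Set (E × E')} {D : ℝ}
  {ρ a b : E} {ρ' a' b' : E'}

theorem sub_le_sSup_pathHeights (hE' : IsGeodesicSpace E') (hR : ∀ x, ∃ x', (x, x') ∈ R)
    (hD : ∀ p ∈ R, ∀ q ∈ R, |dist p.1 q.1 - dist p.2 q.2| ≤ D) (hρ : (ρ, ρ') ∈ R)
    (ha : (a, a') ∈ R) (hb : (b, b') ∈ R) {m : ℝ} (hm : m ∈ pathHeights ρ a b) {ε : ℝ}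
    (hε : 0 < ε) : m - (3 * D + ε) / 2 ≤ sSup (pathHeights ρ' a' b') := by
  have hD₀ : 0 ≤ D := (abs_nonneg _).trans (hD _ hρ _ hρ)
  obtain ⟨γ, hγ, h₀, h₁, rfl⟩ := hm
  obtain ⟨n, hn, hstep⟩ := hγ.exists_nat_dist_lt hε
  obtain ⟨y, hy₀, hyn, hy⟩ := exists_seq_mem_of_forall_exists hR (fun i : ℕ => γ (i / n)) hn
    (by simpa [h₀] using ha) (by simpa [hn, h₁] using hb)
  have hhigh : ∀ i ≤ n, (⨅ t : Icc (0 : ℝ) 1, dist ρ (γ t)) - D ≤ dist ρ' (y i) :=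
    fun i hi => by
      have hγi := iInf_dist_le ρ γ (natCast_div_mem_Icc hi)
      have hyi := (abs_le.1 (hD _ hρ _ (hy i))).2
      simp only at hyi
      linarith
  have hclose : ∀ i < n, dist (y i) (y (i + 1)) < ε + D := fun i hi => by
    have hyi := (abs_le.1 (hD _ (hy i) _ (hy (i + 1)))).1
    simp only at hyi
    linarith [hstep i hi]
  rw [← hy₀, ← hyn]
  refine JoinedIn.le_sSup_pathHeights
    (joinedIn_of_forall_joinedIn_succ ?_ fun i hi => hE'.joinedIn_le_dist ?_)
  · show _ ≤ dist ρ' (y 0)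
    linarith [hhigh 0 n.zero_le]
  · linarith [hhigh i hi.le, hhigh (i + 1) hi, hclose i hi]

theorem sSup_pathHeights_le (hE' : IsGeodesicSpace E') (hR : ∀ x, ∃ x', (x, x') ∈ R)
    (hD : ∀ p ∈ R, ∀ q ∈ R, |dist p.1 q.1 - dist p.2 q.2| ≤ D) (hρ : (ρ, ρ') ∈ R)
    (ha : (a, a') ∈ R) (hb : (b, b') ∈ R) :
    sSup (pathHeights ρ a b) ≤ sSup (pathHeights ρ' a' b') + 3 * D / 2 := by
  have hD₀ : 0 ≤ D := (abs_nonneg _).trans (hD _ hρ _ hρ)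
  have hS' : 0 ≤ sSup (pathHeights ρ' a' b') :=
    Real.sSup_nonneg fun _ => nonneg_of_mem_pathHeights
  refine Real.sSup_le (fun m hm => le_of_forall_pos_le_add fun ε hε => ?_) (by positivity)
  linarith [sub_le_sSup_pathHeights hE' hR hD hρ ha hb hm (mul_pos two_pos hε)]

theorem abs_dKac_sub_dKac_le (hE : IsGeodesicSpace E) (hE' : IsGeodesicSpace E')
    (hR : IsCorrespondence ρ ρ' R) (hD : ∀ p ∈ R, ∀ q ∈ R, |dist p.1 q.1 - dist p.2 q.2| ≤ D)
    (ha : (a, a') ∈ R) (hb : (b, b') ∈ R) : |dKac ρ a b - dKac ρ' a' b'| ≤ 5 * D := by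
  have h₁ := sSup_pathHeights_le hE' hR.2.1 hD hR.1 ha hb
  have h₂ := sSup_pathHeights_le (R := Prod.swap ⁻¹' R) hE hR.2.2
    (fun p hp q hq => by rw [abs_sub_comm]; exact hD _ hp _ hq) hR.1 ha hb
  have hρa := abs_le.1 (hD _ hR.1 _ ha)
  have hρb := abs_le.1 (hD _ hR.1 _ hb)
  simp only at hρa hρb
  rw [dKac_eq, dKac_eq, abs_le]
  constructor <;> linarith

end Correspondence

theorem distortion_le {X Y : Type*} {dX : X → X → ℝ} {dY : Y → Y → ℝ} {R : Set (X × Y)}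
    {C : ℝ} (hC : 0 ≤ C) (h : ∀ p ∈ R, ∀ q ∈ R, |dX p.1 q.1 - dY p.2 q.2| ≤ C) :
    distortion dX dY R ≤ C :=
  Real.sSup_le (by rintro _ ⟨p, hp, q, hq, rfl⟩; exact h p hp q hq) hC

theorem abs_dist_sub_le_distortion {E E' : Type*} [MetricSpace E] [BoundedSpace E]
    [MetricSpace E'] [BoundedSpace E'] {R : Set (E × E')} {p q : E × E'} (hp : p ∈ R)
    (hq : q ∈ R) :
    |dist p.1 q.1 - dist p.2 q.2| ≤
      distortion (fun a b : E => dist a b) (fun a b : E' => dist a b) R := by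
  refine le_csSup ⟨Metric.diam (univ : Set E) + Metric.diam (univ : Set E'), ?_⟩
    ⟨p, hp, q, hq, rfl⟩
  rintro _ ⟨p, -, q, -, rfl⟩
  have h₁ := Metric.dist_le_diam_of_mem (Bornology.IsBounded.all _) (mem_univ p.1) (mem_univ q.1)
  have h₂ := Metric.dist_le_diam_of_mem (Bornology.IsBounded.all _) (mem_univ p.2) (mem_univ q.2)
  have h₁' := dist_nonneg (x := p.1) (y := q.1)
  have h₂' := dist_nonneg (x := p.2) (y := q.2)
  rw [abs_le]
  constructor <;> linarith

/-- If `R` is a correspondence between two pointed compact geodesic spaces with distortion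
`D`, then the induced correspondence between the cactus spaces (which pairs classes having
`R`-related representatives, and hence has distortion equal to the distortion of `R` with
respect to the cactus pseudo-distances) has distortion at most `6 D`. -/
theorem stmt9 {E E' : Type*} [MetricSpace E] [CompactSpace E]
    [MetricSpace E'] [CompactSpace E']
    (hgeo : IsGeodesicSpace E) (hgeo' : IsGeodesicSpace E') (ρ : E) (ρ' : E')
    (R : Set (E × E')) (hR : IsCorrespondence ρ ρ' R) (D : ℝ)
    (hD : distortion (fun a b : E => dist a b) (fun a b : E' => dist a b) R = D) :
    distortion (dKac ρ) (dKac ρ') R ≤ 6 * D := by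
  subst hD
  have hdist := fun p (hp : p ∈ R) q (hq : q ∈ R) => abs_dist_sub_le_distortion hp hq
  have hD₀ := (abs_nonneg _).trans (hdist _ hR.1 _ hR.1)
  refine distortion_le (by positivity) fun p hp q hq => ?_
  linarith [abs_dKac_sub_dKac_le hgeo hgeo' hR hdist hp hq]
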